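/- Let f: {0,1}^n → {0,1} be a Boolean function that depends on its i-th variable (i.e., there exists x ∈ {0,1}^n with f(x) ≠ f(x^i), where x^i denotes x with the i-th bit flipped). Then the number of x ∈ {0,1}^n with f(x) ≠ f(x^i) is at least 2^{n − 2·rdeg(f)}; equivalently, the influence Inf_i[f] = Pr_x[f(x) ≠ f(x^i)] is at least 2^{−2·rdeg(f)}. -/

import Mathlib

open MvPolynomial

/-- A real multivariate polynomial is multilinear if every variable occurs with degree ≤ 1. -/
def Multilinear {σ : Type*} (p : MvPolynomial σ ℝ) : Prop :=
  ∀ i, MvPolynomial.degreeOf i p ≤ 1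

/-- Evaluation of a polynomial at a Boolean point (true ↦ 1, false ↦ 0). -/
noncomputable def evalB {σ : Type*} (x : σ → Bool) (p : MvPolynomial σ ℝ) : ℝ :=
  MvPolynomial.eval (fun i => if x i then (1:ℝ) else 0) p

/-- The real value of a Boolean (true ↦ 1, false ↦ 0). -/
def bval (b : Bool) : ℝ := if b then 1 else 0

/-- The rational degree of a Boolean function: the minimum of max(deg p, deg q) over all
rational representations p/q of f by multilinear real polynomials. -/
noncomputable def rdeg {n : ℕ} (f : (Fin n → Bool) → Bool) : ℕ :=
  sInf {d | ∃ p q : MvPolynomial (Fin n) ℝ, Multilinear p ∧ Multilinear q ∧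
    (∀ x, evalB x q ≠ 0 ∧ evalB x p / evalB x q = bval (f x)) ∧
    max p.totalDegree q.totalDegree = d}

/-
Let `p / q` realise `rdeg f = d`. The polynomial `G(x) = p(x) q(xⁱ) - p(xⁱ) q(x)` equals
`(f(x) - f(xⁱ)) q(x) q(xⁱ)` on the cube, so it is nonzero exactly where `f` is sensitive to `i`;
and `x ↦ xⁱ` is the affine substitution `Xᵢ ↦ 1 - Xᵢ`, so `deg G ≤ 2d`. It remains to see that a
polynomial of degree `≤ D` which does not vanish on `{0,1}ⁿ` is nonzero at `2ⁿ⁻ᴰ` or more of its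
points. Splitting off the first variable, `P(0, y) = B(y)` and `P(1, y) = B(y) + Δ(y)` with
`deg B ≤ D` and `deg Δ < D`: if `Δ` vanishes on the cube both halves equal `B`, and otherwise,
at every nonzero of `Δ`, one of the two halves is nonzero.
-/

open Finset

theorem Finset.card_filter_ne_zero_le_add {α M : Type*} [Fintype α] [AddGroup M]
    [DecidableEq M] (u v : α → M) :
    #{x | v x ≠ 0} ≤ #{x | u x ≠ 0} + #{x | u x + v x ≠ 0} := by
  classical
  refine (card_le_card fun x hx => ?_).trans (card_union_le _ _)
  simp only [mem_filter, mem_univ, true_and, mem_union] at hx ⊢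
  by_contra! h
  exact hx (by simpa [h.1] using h.2)

theorem Finset.card_filter_fin_cons_bool {n : ℕ} (p : (Fin (n + 1) → Bool) → Prop)
    [DecidablePred p] :
    #{x | p x} = #{y | p (Fin.cons false y)} + #{y | p (Fin.cons true y)} := by
  simp only [Finset.card_filter]
  rw [← (Fin.consEquiv fun _ => Bool).sum_comp, Fintype.sum_prod_type, Fintype.sum_bool,
    add_comm]
  rfl

namespace MvPolynomial

def cubePoint (R : Type*) [Zero R] [One R] {σ : Type*} (x : σ → Bool) : σ → R :=
  fun j => if x j then 1 else 0

section Semiring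

variable {σ τ R : Type*} [CommSemiring R]

theorem totalDegree_aeval_le_mul (g : σ → MvPolynomial τ R) {k : ℕ}
    (hg : ∀ j, (g j).totalDegree ≤ k) (p : MvPolynomial σ R) :
    (aeval g p).totalDegree ≤ p.totalDegree * k := by
  conv_lhs => rw [p.as_sum, map_sum]
  refine totalDegree_finsetSum_le fun s hs => ?_
  rw [aeval_monomial]
  refine (totalDegree_mul _ _).trans ?_
  rw [algebraMap_eq, totalDegree_C, zero_add, Finsupp.prod]
  refine (totalDegree_finsetProd _ _).trans ?_
  calc ∑ j ∈ s.support, (g j ^ s j).totalDegree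
      ≤ ∑ j ∈ s.support, s j * k :=
        sum_le_sum fun j _ => (totalDegree_pow _ _).trans (Nat.mul_le_mul_left _ (hg j))
    _ = (∑ j ∈ s.support, s j) * k := (sum_mul ..).symm
    _ ≤ p.totalDegree * k := Nat.mul_le_mul_right _ (le_totalDegree hs)

theorem totalDegree_X_le (j : σ) : (X j : MvPolynomial σ R).totalDegree ≤ 1 :=
  (totalDegree_monomial_le _ _).trans (by simp)

variable {n : ℕ}

theorem cubePoint_cons (b : Bool) (y : Fin n → Bool) :
    cubePoint R (Fin.cons b y : Fin (n + 1) → Bool) =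
      Fin.cons (if b then 1 else 0) (cubePoint R y) := by
  ext j
  cases j using Fin.cases <;> rfl

theorem eval_cubePoint_cons_false (P : MvPolynomial (Fin (n + 1)) R) (y : Fin n → Bool) :
    eval (cubePoint R (Fin.cons false y)) P =
      eval (cubePoint R y) ((finSuccEquiv R n P).coeff 0) := by
  rw [cubePoint_cons, eval_eq_eval_mv_eval', if_neg Bool.false_ne_true,
    ← Polynomial.coeff_zero_eq_eval_zero, Polynomial.coeff_map]

theorem eval_cubePoint_cons_true (P : MvPolynomial (Fin (n + 1)) R) (y : Fin n → Bool) :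
    eval (cubePoint R (Fin.cons true y)) P =
      eval (cubePoint R y) ((finSuccEquiv R n P).coeff 0) +
        eval (cubePoint R y) ((finSuccEquiv R n P).divX.eval 1) := by
  rw [cubePoint_cons, eval_eq_eval_mv_eval', if_pos rfl, Polynomial.eval_one_map]
  conv_lhs => rw [← Polynomial.X_mul_divX_add (finSuccEquiv R n P)]
  simp only [Polynomial.eval_add, Polynomial.eval_mul, Polynomial.eval_X, Polynomial.eval_C,
    one_mul, map_add]
  ring

theorem totalDegree_coeff_zero_finSuccEquiv_le (P : MvPolynomial (Fin (n + 1)) R) :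
    ((finSuccEquiv R n P).coeff 0).totalDegree ≤ P.totalDegree := by
  by_cases h : (finSuccEquiv R n P).coeff 0 = 0
  · simp [h]
  · simpa using totalDegree_coeff_finSuccEquiv_add_le P 0 h

theorem totalDegree_eval_one_divX_finSuccEquiv_lt (P : MvPolynomial (Fin (n + 1)) R)
    (h : (finSuccEquiv R n P).divX.eval 1 ≠ 0) :
    ((finSuccEquiv R n P).divX.eval 1).totalDegree < P.totalDegree := by
  simp only [Polynomial.eval_eq_sum_range, one_pow, mul_one, Polynomial.coeff_divX] at h ⊢
  obtain ⟨i, -, hi⟩ := exists_ne_zero_of_sum_ne_zero h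
  have hP := totalDegree_coeff_finSuccEquiv_add_le P (i + 1) hi
  have : (∑ j ∈ range ((finSuccEquiv R n P).divX.natDegree + 1),
      (finSuccEquiv R n P).coeff (j + 1)).totalDegree ≤ P.totalDegree - 1 := by
    refine totalDegree_finsetSum_le fun j _ => ?_
    by_cases hj : (finSuccEquiv R n P).coeff (j + 1) = 0
    · simp [hj]
    · have := totalDegree_coeff_finSuccEquiv_add_le P (j + 1) hj
      omega
  omega

end Semiring

section Ring

variable {σ R : Type*} [CommRing R]

theorem totalDegree_one_sub_X_le (j : σ) : (1 - X j : MvPolynomial σ R).totalDegree ≤ 1 :=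
  (totalDegree_sub _ _).trans (max_le (by simp) (totalDegree_X_le j))

noncomputable def flipVar [DecidableEq σ] (i : σ) : MvPolynomial σ R →ₐ[R] MvPolynomial σ R :=
  aeval (Function.update X i (1 - X i))

theorem eval_cubePoint_flipVar [DecidableEq σ] (i : σ) (x : σ → Bool) (p : MvPolynomial σ R) :
    eval (cubePoint R x) (flipVar i p) = eval (cubePoint R (Function.update x i (!x i))) p := by
  rw [flipVar, aeval_eq_bind₁]
  change eval₂Hom (RingHom.id R) _ _ = _
  rw [eval₂Hom_bind₁]
  suffices h : (fun j => eval (cubePoint R x) (Function.update X i (1 - X i) j)) =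
      cubePoint R (Function.update x i (!x i)) from congrArg (fun v => eval v p) h
  funext j
  by_cases hj : j = i
  · subst hj
    cases hx : x j <;> simp [cubePoint, hx]
  · simp [cubePoint, Function.update_of_ne hj]

theorem totalDegree_flipVar_le [DecidableEq σ] (i : σ) (p : MvPolynomial σ R) :
    (flipVar i p).totalDegree ≤ p.totalDegree := by
  refine (totalDegree_aeval_le_mul _ (fun j => ?_) p).trans_eq (mul_one _)
  rw [Function.update_apply]
  split_ifs with hj
  · exact totalDegree_one_sub_X_le i
  · exact totalDegree_X_le j

noncomputable def cubeIndicator [Fintype σ] (a : σ → Bool) : MvPolynomial σ R :=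
  ∏ j, if a j then X j else 1 - X j

theorem degreeOf_cubeIndicator_le [Fintype σ] (a : σ → Bool) (i : σ) :
    (cubeIndicator a : MvPolynomial σ R).degreeOf i ≤ 1 := by
  classical
  refine (degreeOf_prod_le _ _ _).trans ?_
  calc ∑ j, (if a j then X j else 1 - X j : MvPolynomial σ R).degreeOf i
      ≤ ∑ j, if j = i then 1 else 0 := by
        refine sum_le_sum fun j _ => ?_
        split_ifs with ha hj hj
        · exact (degreeOf_le_totalDegree _ _).trans (totalDegree_X_le j)
        · exact (degreeOf_X_of_ne (Ne.symm hj)).le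
        · exact hj ▸ (degreeOf_le_totalDegree _ _).trans (totalDegree_one_sub_X_le j)
        · exact (degreeOf_sub_le _ _ _).trans
            (max_le (by simp) (degreeOf_X_of_ne (Ne.symm hj)).le)
    _ = 1 := by simp

theorem eval_cubePoint_cubeIndicator [Fintype σ] (a x : σ → Bool) :
    eval (cubePoint R x) (cubeIndicator a) = if x = a then 1 else 0 := by
  rw [cubeIndicator, map_prod]
  split_ifs with h
  · subst h
    exact prod_eq_one fun j _ => by cases hx : x j <;> simp [cubePoint, hx]
  · obtain ⟨j, hj⟩ := Function.ne_iff.mp h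
    exact prod_eq_zero (mem_univ j)
      (by cases hx : x j <;> cases ha : a j <;> simp_all [cubePoint])

theorem two_pow_le_card_eval_cubePoint_ne_zero_mul [DecidableEq R] {n : ℕ}
    (P : MvPolynomial (Fin n) R) {D : ℕ} (hD : P.totalDegree ≤ D)
    (hP : ∃ x, eval (cubePoint R x) P ≠ 0) :
    2 ^ n ≤ #{x | eval (cubePoint R x) P ≠ 0} * 2 ^ D := by
  induction n generalizing D with
  | zero =>
    obtain ⟨x, hx⟩ := hP
    have : 0 < #{x | eval (cubePoint R x) P ≠ 0} :=
      card_pos.mpr ⟨x, mem_filter.mpr ⟨mem_univ x, hx⟩⟩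
    simpa using Nat.mul_le_mul this Nat.one_le_two_pow
  | succ n ih =>
    rw [card_filter_fin_cons_bool]
    simp only [eval_cubePoint_cons_false, eval_cubePoint_cons_true]
    set B := (finSuccEquiv R n P).coeff 0
    set Δ := (finSuccEquiv R n P).divX.eval 1
    by_cases hΔ : ∃ y, eval (cubePoint R y) Δ ≠ 0
    · have hΔD : Δ.totalDegree + 1 ≤ D :=
        (totalDegree_eval_one_divX_finSuccEquiv_lt P
          fun h => hΔ.elim fun y hy => hy (by simp [Δ, h])).trans_le hD
      calc 2 ^ (n + 1) = 2 ^ n * 2 := pow_succ 2 n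
        _ ≤ #{y | eval (cubePoint R y) Δ ≠ 0} * 2 ^ Δ.totalDegree * 2 :=
          Nat.mul_le_mul_right 2 (ih Δ le_rfl hΔ)
        _ = #{y | eval (cubePoint R y) Δ ≠ 0} * 2 ^ (Δ.totalDegree + 1) := by ring
        _ ≤ _ := Nat.mul_le_mul (card_filter_ne_zero_le_add _ _)
          (Nat.pow_le_pow_right two_pos hΔD)
    · simp only [not_exists, not_not] at hΔ
      have hB : ∃ y, eval (cubePoint R y) B ≠ 0 := by
        obtain ⟨x, hx⟩ := hP
        induction x using Fin.consCases with
        | cons b y =>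
          refine ⟨y, ?_⟩
          cases b
          · rwa [eval_cubePoint_cons_false] at hx
          · rwa [eval_cubePoint_cons_true, hΔ, add_zero] at hx
      have := ih B ((totalDegree_coeff_zero_finSuccEquiv_le P).trans hD) hB
      simp only [hΔ, add_zero, pow_succ, add_mul]
      omega

end Ring

end MvPolynomial

theorem exists_multilinear_evalB_eq {σ : Type*} [Fintype σ] (g : (σ → Bool) → ℝ) :
    ∃ p : MvPolynomial σ ℝ, Multilinear p ∧ ∀ x, evalB x p = g x := by
  classical
  refine ⟨∑ a, C (g a) * cubeIndicator a, fun i => ?_, fun x => ?_⟩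
  · refine (degreeOf_sum_le _ _ _).trans (Finset.sup_le fun a _ => ?_)
    exact (degreeOf_C_mul_le _ _ _).trans (degreeOf_cubeIndicator_le a i)
  · change eval (cubePoint ℝ x) _ = _
    simp [eval_cubePoint_cubeIndicator]

theorem exists_rational_representation_of_rdeg {n : ℕ} (f : (Fin n → Bool) → Bool) :
    ∃ p q : MvPolynomial (Fin n) ℝ, Multilinear p ∧ Multilinear q ∧
      (∀ x, evalB x q ≠ 0 ∧ evalB x p / evalB x q = bval (f x)) ∧
      max p.totalDegree q.totalDegree = rdeg f := by
  obtain ⟨p, hp, hpf⟩ := exists_multilinear_evalB_eq fun x => bval (f x)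
  have hne : {d | ∃ p q : MvPolynomial (Fin n) ℝ, Multilinear p ∧ Multilinear q ∧
      (∀ x, evalB x q ≠ 0 ∧ evalB x p / evalB x q = bval (f x)) ∧
      max p.totalDegree q.totalDegree = d}.Nonempty :=
    ⟨_, p, 1, hp, fun i => by simp, fun x => by simp [evalB, ← hpf x], rfl⟩
  exact Nat.sInf_mem hne

theorem evalB_mul_sub_ne_zero_iff {σ : Type*} {p q : MvPolynomial σ ℝ}
    {F : (σ → Bool) → Bool} (hpq : ∀ x, evalB x q ≠ 0 ∧ evalB x p / evalB x q = bval (F x))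
    (x y : σ → Bool) :
    evalB x p * evalB y q - evalB y p * evalB x q ≠ 0 ↔ F x ≠ F y := by
  have hp z : evalB z p = bval (F z) * evalB z q := by
    rw [← (hpq z).2, div_mul_cancel₀ _ (hpq z).1]
  rw [hp x, hp y, show ∀ a b u v : ℝ, a * u * v - b * v * u = (a - b) * (u * v) by
    intros; ring, mul_ne_zero_iff, and_iff_left (mul_ne_zero (hpq x).1 (hpq y).1)]
  cases F x <;> cases F y <;> norm_num [bval]

/-- If a Boolean function f depends on its i-th variable, then the number of points x with
f(x) ≠ f(x^i) is at least 2^{n − 2·rdeg(f)}, i.e. Inf_i[f] ≥ 2^{−2·rdeg(f)}.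
(Stated multiplicatively over ℕ to avoid truncated subtraction.) -/
theorem stmt_16 (n : ℕ) (f : (Fin n → Bool) → Bool) (i : Fin n)
    (hdep : ∃ x : Fin n → Bool, f x ≠ f (Function.update x i (!(x i)))) :
    2 ^ n ≤
      (Finset.univ.filter
        (fun x : Fin n → Bool => f x ≠ f (Function.update x i (!(x i))))).card
        * 2 ^ (2 * rdeg f) := by
  obtain ⟨p, q, -, -, hpq, hdeg⟩ := exists_rational_representation_of_rdeg f
  set G := p * flipVar i q - flipVar i p * q
  have hG x : eval (cubePoint ℝ x) G ≠ 0 ↔ f x ≠ f (Function.update x i (!(x i))) := by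
    rw [← evalB_mul_sub_ne_zero_iff hpq]
    simp only [G, map_sub, map_mul, eval_cubePoint_flipVar]
    rfl
  have hGdeg : G.totalDegree ≤ 2 * rdeg f := by
    have hp : p.totalDegree ≤ rdeg f := hdeg ▸ le_max_left _ _
    have hq : q.totalDegree ≤ rdeg f := hdeg ▸ le_max_right _ _
    refine (totalDegree_sub _ _).trans (max_le ?_ ?_) <;>
      refine (totalDegree_mul _ _).trans ?_
    · linarith [totalDegree_flipVar_le i q]
    · linarith [totalDegree_flipVar_le i p]
  obtain ⟨x₀, hx₀⟩ := hdep
  have key := two_pow_le_card_eval_cubePoint_ne_zero_mul G hGdeg ⟨x₀, (hG x₀).2 hx₀⟩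
  rwa [Finset.filter_congr fun x _ => hG x] at key
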